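/- For all reals ρ > 0, β > 0 and M > 0, the iterated integral ∫₀^∞ e^{−ρt} (∫₀^t ∫₀^t e^{−M(t−u)} e^{−M(t−s)} (e^{−β|u−s|} − e^{−β(u+s)}) ds du) dt equals 4β/(ρ(2β+ρ)(ρ+2M)(β+ρ+M)). -/

import Mathlib

open Real MeasureTheory Set Filter Topology

private lemma primHasDeriv {f : ℝ → ℝ} (hf : Continuous f) (u : ℝ) :
    HasDerivAt (fun x => ∫ s in (0:ℝ)..x, f s) (f u) u :=
  intervalIntegral.integral_hasDerivAt_right (hf.intervalIntegrable 0 u)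
    (hf.stronglyMeasurable.stronglyMeasurableAtFilter) hf.continuousAt

private lemma primCont {f : ℝ → ℝ} (hf : Continuous f) :
    Continuous (fun x => ∫ s in (0:ℝ)..x, f s) :=
  continuous_iff_continuousAt.2 fun u => (primHasDeriv hf u).continuousAt

private lemma expDeriv (c x : ℝ) : HasDerivAt (fun y => Real.exp (c*y)) (c * Real.exp (c*x)) x := by
  have := (Real.hasDerivAt_exp (c*x)).comp x ((hasDerivAt_id x).const_mul c)
  exact this.congr_deriv (by ring)

private lemma int_exp_neg_Ioi {b : ℝ} (hb : 0 < b) :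
    ∫ t in Ioi (0:ℝ), Real.exp (-b*t) = 1/b := by
  have hd : ∀ x ∈ Ici (0:ℝ), HasDerivAt (fun t => -Real.exp (-b*t)/b) (Real.exp (-b*x)) x := by
    intro x _
    have := ((expDeriv (-b) x).neg).div_const b
    refine this.congr_deriv ?_
    field_simp
  have hten : Tendsto (fun t => -Real.exp (-b*t)/b) atTop (𝓝 0) := by
    have h1 : Tendsto (fun t : ℝ => -b*t) atTop atBot := by
      apply Tendsto.const_mul_atTop_of_neg (neg_neg_iff_pos.2 hb) tendsto_id
    have := (Real.tendsto_exp_atBot.comp h1).neg.div_const b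
    simpa using this
  have := MeasureTheory.integral_Ioi_of_hasDerivAt_of_tendsto' hd
    (exp_neg_integrableOn_Ioi 0 hb) hten
  rw [this]
  simp [neg_div]

private lemma integrableOn_exp_mul {a c C : ℝ} (hca : c < a) {h : ℝ → ℝ} (hh : Continuous h)
    (hb : ∀ t, 0 ≤ t → |h t| ≤ C * Real.exp (c * t)) :
    IntegrableOn (fun t => Real.exp (-a * t) * h t) (Ioi (0:ℝ)) := by
  have hac : 0 < a - c := by linarith
  refine Integrable.mono' ((exp_neg_integrableOn_Ioi 0 hac).const_mul C) ?_ ?_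
  · exact ((Real.continuous_exp.comp (continuous_const.mul continuous_id)).mul
      hh).aestronglyMeasurable.restrict
  · filter_upwards [ae_restrict_mem measurableSet_Ioi] with t ht
    have ht0 : (0:ℝ) ≤ t := le_of_lt ht
    have h1 := hb t ht0
    rw [norm_mul, Real.norm_eq_abs, Real.norm_eq_abs, Real.abs_exp]
    calc Real.exp (-a*t) * |h t| ≤ Real.exp (-a*t) * (C * Real.exp (c*t)) :=
          mul_le_mul_of_nonneg_left h1 (Real.exp_nonneg _)
      _ = C * Real.exp (-(a-c)*t) := by
          rw [show Real.exp (-a*t) * (C * Real.exp (c*t))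
              = C * (Real.exp (-a*t) * Real.exp (c*t)) from by ring, ← Real.exp_add]
          ring_nf

private lemma ibp_Ioi (a c C : ℝ) (hc : 0 < c) (hca : c < a) {g : ℝ → ℝ} (hg : Continuous g)
    (hb : ∀ t, 0 ≤ t → |g t| ≤ C * Real.exp (c * t)) :
    (∫ t in Ioi (0:ℝ), Real.exp (-a * t) * ∫ s in (0:ℝ)..t, g s)
      = (1/a) * ∫ t in Ioi (0:ℝ), Real.exp (-a * t) * g t := by
  have ha : 0 < a := hc.trans hca
  have hC : 0 ≤ C := by
    have := hb 0 le_rfl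
    simp only [mul_zero, Real.exp_zero, mul_one] at this
    exact (abs_nonneg _).trans this
  set G : ℝ → ℝ := fun t => ∫ s in (0:ℝ)..t, g s with hGdef
  have hGd : ∀ t, HasDerivAt G (g t) t := primHasDeriv hg
  have hGc : Continuous G := primCont hg
  have hGb : ∀ t, 0 ≤ t → |G t| ≤ (C/c) * Real.exp (c*t) := by
    intro t ht
    have h1 : |G t| ≤ ∫ s in (0:ℝ)..t, C * Real.exp (c*s) := by
      calc |G t| ≤ ∫ s in (0:ℝ)..t, |g s| := by
            simpa using intervalIntegral.abs_integral_le_integral_abs ht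
        _ ≤ ∫ s in (0:ℝ)..t, C * Real.exp (c*s) := by
            apply intervalIntegral.integral_mono_on ht
              (hg.abs.intervalIntegrable _ _)
              ((continuous_const.mul
                (Real.continuous_exp.comp (continuous_const.mul continuous_id))).intervalIntegrable _ _)
            exact fun s hs => hb s hs.1
    have h2 : (∫ s in (0:ℝ)..t, C * Real.exp (c*s)) = C/c * (Real.exp (c*t) - 1) := by
      rw [intervalIntegral.integral_const_mul]
      have : ∀ s ∈ uIcc (0:ℝ) t, HasDerivAt (fun y => Real.exp (c*y)/c) (Real.exp (c*s)) s := by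
        intro s _
        have := (expDeriv c s).div_const c
        refine this.congr_deriv ?_
        field_simp
      rw [intervalIntegral.integral_eq_sub_of_hasDerivAt this
        ((Real.continuous_exp.comp (continuous_const.mul continuous_id)).intervalIntegrable _ _)]
      simp
      ring
    have h3 : C/c * (Real.exp (c*t) - 1) ≤ C/c * Real.exp (c*t) := by
      have : (0:ℝ) ≤ C/c := div_nonneg hC hc.le
      nlinarith [Real.exp_pos (c*t)]
    linarith [h1, h2 ▸ h1]
  have hFd : ∀ x ∈ Ici (0:ℝ), HasDerivAt (fun t => Real.exp (-a*t) * G t)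
      (-a * (Real.exp (-a*x) * G x) + Real.exp (-a*x) * g x) x := by
    intro x _
    have := (expDeriv (-a) x).mul (hGd x)
    refine this.congr_deriv ?_
    ring
  have hI1 : IntegrableOn (fun t => Real.exp (-a*t) * G t) (Ioi (0:ℝ)) :=
    integrableOn_exp_mul hca hGc hGb
  have hI2 : IntegrableOn (fun t => Real.exp (-a*t) * g t) (Ioi (0:ℝ)) :=
    integrableOn_exp_mul hca hg hb
  have hint : IntegrableOn (fun x => -a * (Real.exp (-a*x) * G x) + Real.exp (-a*x) * g x)
      (Ioi (0:ℝ)) := (hI1.const_mul (-a)).add hI2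
  have hten : Tendsto (fun t => Real.exp (-a*t) * G t) atTop (𝓝 0) := by
    have hbnd : ∀ᶠ t in atTop, ‖Real.exp (-a*t) * G t‖ ≤ (C/c) * Real.exp (-(a-c)*t) := by
      filter_upwards [eventually_ge_atTop (0:ℝ)] with t ht
      rw [norm_mul, Real.norm_eq_abs, Real.norm_eq_abs, Real.abs_exp]
      calc Real.exp (-a*t) * |G t| ≤ Real.exp (-a*t) * ((C/c) * Real.exp (c*t)) :=
            mul_le_mul_of_nonneg_left (hGb t ht) (Real.exp_nonneg _)
        _ = (C/c) * Real.exp (-(a-c)*t) := by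
            rw [show Real.exp (-a*t) * ((C/c) * Real.exp (c*t))
                = (C/c) * (Real.exp (-a*t) * Real.exp (c*t)) from by ring, ← Real.exp_add]
            ring_nf
    have hlim : Tendsto (fun t => (C/c) * Real.exp (-(a-c)*t)) atTop (𝓝 0) := by
      have h1 : Tendsto (fun t : ℝ => -(a-c)*t) atTop atBot :=
        Tendsto.const_mul_atTop_of_neg (by linarith) tendsto_id
      have := (Real.tendsto_exp_atBot.comp h1).const_mul (C/c)
      simpa using this
    exact squeeze_zero_norm' hbnd hlim
  have heq := MeasureTheory.integral_Ioi_of_hasDerivAt_of_tendsto' hFd hint hten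
  have hG0 : G 0 = 0 := intervalIntegral.integral_same
  rw [MeasureTheory.integral_add (hI1.const_mul (-a)) hI2, MeasureTheory.integral_const_mul] at heq
  simp only [mul_zero, Real.exp_zero, hG0, one_mul, zero_sub, neg_zero, mul_zero] at heq
  have hane : a ≠ 0 := ne_of_gt ha
  have hX : a * (∫ t in Ioi (0:ℝ), Real.exp (-a*t) * G t)
      = ∫ t in Ioi (0:ℝ), Real.exp (-a*t) * g t := by linarith
  calc (∫ t in Ioi (0:ℝ), Real.exp (-a * t) * ∫ s in (0:ℝ)..t, g s)
      = ∫ t in Ioi (0:ℝ), Real.exp (-a*t) * G t := rfl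
    _ = 1/a * (a * (∫ t in Ioi (0:ℝ), Real.exp (-a*t) * G t)) := by
        field_simp
    _ = _ := by rw [hX]

private lemma square_eq (β M : ℝ) {t : ℝ} (ht : 0 ≤ t) :
    (∫ u in (0:ℝ)..t, ∫ s in (0:ℝ)..t,
        Real.exp (M*u) * Real.exp (M*s) * (Real.exp (-β*|u-s|) - Real.exp (-β*(u+s))))
      = 2 * ∫ u in (0:ℝ)..t, Real.exp ((M-β)*u) *
          ∫ s in (0:ℝ)..u, (Real.exp ((M+β)*s) - Real.exp ((M-β)*s)) := by
  set k : ℝ → ℝ := fun s => Real.exp ((M+β)*s) - Real.exp ((M-β)*s) with hkdef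
  set q : ℝ → ℝ := fun s => Real.exp ((M-β)*s) with hqdef
  have hkc : Continuous k := by
    apply Continuous.sub <;> exact Real.continuous_exp.comp (continuous_const.mul continuous_id)
  have hqc : Continuous q := Real.continuous_exp.comp (continuous_const.mul continuous_id)
  set K : ℝ → ℝ := fun u => ∫ s in (0:ℝ)..u, k s with hKdef
  set Q : ℝ → ℝ := fun u => ∫ s in (0:ℝ)..u, q s with hQdef
  have hKc : Continuous K := primCont hkc
  have hQc : Continuous Q := primCont hqc
  have hsplit : ∀ u ∈ uIcc (0:ℝ) t,
      (∫ s in (0:ℝ)..t,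
          Real.exp (M*u) * Real.exp (M*s) * (Real.exp (-β*|u-s|) - Real.exp (-β*(u+s))))
        = Real.exp ((M-β)*u) * K u + k u * (Q t - Q u) := by
    intro u hu
    rw [uIcc_of_le ht] at hu
    have hfc : Continuous (fun s =>
        Real.exp (M*u) * Real.exp (M*s) * (Real.exp (-β*|u-s|) - Real.exp (-β*(u+s)))) := by
      apply Continuous.mul
      · exact continuous_const.mul (Real.continuous_exp.comp (continuous_const.mul continuous_id))
      apply Continuous.sub
      · exact Real.continuous_exp.comp
          (continuous_const.mul ((continuous_const.sub continuous_id).abs))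
      · exact Real.continuous_exp.comp
          (continuous_const.mul (continuous_const.add continuous_id))
    rw [← intervalIntegral.integral_add_adjacent_intervals
      (hfc.intervalIntegrable 0 u) (hfc.intervalIntegrable u t)]
    congr 1
    · have hcg : ∀ s ∈ uIcc (0:ℝ) u,
          Real.exp (M*u) * Real.exp (M*s) * (Real.exp (-β*|u-s|) - Real.exp (-β*(u+s)))
            = Real.exp ((M-β)*u) * k s := by
        intro s hs
        rw [uIcc_of_le hu.1] at hs
        rw [abs_of_nonneg (by linarith [hs.2] : (0:ℝ) ≤ u - s)]
        simp only [hkdef, mul_sub, ← Real.exp_add]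
        ring_nf
      rw [intervalIntegral.integral_congr hcg, intervalIntegral.integral_const_mul]
    · have hcg : ∀ s ∈ uIcc u t,
          Real.exp (M*u) * Real.exp (M*s) * (Real.exp (-β*|u-s|) - Real.exp (-β*(u+s)))
            = k u * q s := by
        intro s hs
        rw [uIcc_of_le hu.2] at hs
        rw [abs_of_nonpos (by linarith [hs.1] : u - s ≤ 0)]
        simp only [hkdef, hqdef, mul_sub, sub_mul, ← Real.exp_add]
        ring_nf
      rw [intervalIntegral.integral_congr hcg, intervalIntegral.integral_const_mul]
      have hadj : (∫ s in (0:ℝ)..u, q s) + (∫ s in u..t, q s) = ∫ s in (0:ℝ)..t, q s :=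
        intervalIntegral.integral_add_adjacent_intervals
          (hqc.intervalIntegrable 0 u) (hqc.intervalIntegrable u t)
      have heq2 : (∫ s in u..t, q s) = Q t - Q u := by
        simp only [hQdef]
        linarith [hadj]
      rw [heq2]
  rw [intervalIntegral.integral_congr hsplit]
  have hPd : ∀ u, HasDerivAt (fun x => K x * (Q t - Q x))
      (k u * (Q t - Q u) - Real.exp ((M-β)*u) * K u) u := by
    intro u
    have h1 : HasDerivAt K (k u) u := primHasDeriv hkc u
    have h2 : HasDerivAt (fun x => Q t - Q x) (-(q u)) u :=
      (primHasDeriv hqc u).const_sub (Q t)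
    have := h1.mul h2
    refine this.congr_deriv ?_
    simp only [hqdef]
    ring
  have hint1 : IntervalIntegrable (fun u => 2 * (Real.exp ((M-β)*u) * K u)) volume 0 t :=
    (continuous_const.mul (hqc.mul hKc)).intervalIntegrable _ _
  have hint2 : IntervalIntegrable
      (fun u => k u * (Q t - Q u) - Real.exp ((M-β)*u) * K u) volume 0 t :=
    ((hkc.mul (continuous_const.sub hQc)).sub (hqc.mul hKc)).intervalIntegrable _ _
  have hsum : (∫ u in (0:ℝ)..t, (Real.exp ((M-β)*u) * K u + k u * (Q t - Q u)))
      = (∫ u in (0:ℝ)..t, 2 * (Real.exp ((M-β)*u) * K u))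
        + ∫ u in (0:ℝ)..t, (k u * (Q t - Q u) - Real.exp ((M-β)*u) * K u) := by
    rw [← intervalIntegral.integral_add hint1 hint2]
    apply intervalIntegral.integral_congr
    intro u _
    ring
  rw [hsum, intervalIntegral.integral_eq_sub_of_hasDerivAt (fun u _ => hPd u) hint2]
  have hK0 : K 0 = 0 := intervalIntegral.integral_same
  have hQt : Q t - Q t = 0 := sub_self _
  rw [hK0, hQt]
  rw [intervalIntegral.integral_const_mul]
  ring

/-- The iterated integral
`∫₀^∞ e^{−ρt} (∫₀^t ∫₀^t e^{−M(t−u)} e^{−M(t−s)} (e^{−β|u−s|} − e^{−β(u+s)}) ds du) dt`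
equals `4β/(ρ(2β+ρ)(ρ+2M)(β+ρ+M))`. -/
theorem ou_inventory_second_moment_integral (ρ β M : ℝ) (hρ : 0 < ρ) (hβ : 0 < β) (hM : 0 < M) :
    ∫ t in Set.Ioi (0 : ℝ), Real.exp (-ρ * t) *
        (∫ u in (0 : ℝ)..t, ∫ s in (0 : ℝ)..t,
          Real.exp (-M * (t - u)) * Real.exp (-M * (t - s)) *
            (Real.exp (-β * |u - s|) - Real.exp (-β * (u + s))))
      = 4 * β / (ρ * (2 * β + ρ) * (ρ + 2 * M) * (β + ρ + M)) := by
  have hMβ : (0:ℝ) < M + β := by linarith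
  set k : ℝ → ℝ := fun s => Real.exp ((M+β)*s) - Real.exp ((M-β)*s) with hkdef
  set K : ℝ → ℝ := fun u => ∫ s in (0:ℝ)..u, k s with hKdef
  have hkc : Continuous k := by
    apply Continuous.sub <;> exact Real.continuous_exp.comp (continuous_const.mul continuous_id)
  have hKc : Continuous K := primCont hkc
  have hknn : ∀ s : ℝ, 0 ≤ s → 0 ≤ k s := by
    intro s hs
    have h1 : (M-β)*s ≤ (M+β)*s := by nlinarith [mul_nonneg hβ.le hs]
    simp only [hkdef]
    have := Real.exp_le_exp.2 h1
    linarith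
  have hK0 : ∀ u : ℝ, 0 ≤ u → 0 ≤ K u := fun u hu =>
    intervalIntegral.integral_nonneg hu (fun s hs => hknn s hs.1)
  have hKb : ∀ u : ℝ, 0 ≤ u → K u ≤ u * Real.exp ((M+β)*u) := by
    intro u hu
    have h1 : K u ≤ ∫ _s in (0:ℝ)..u, Real.exp ((M+β)*u) := by
      apply intervalIntegral.integral_mono_on hu (hkc.intervalIntegrable _ _)
        intervalIntegrable_const
      intro s hs
      have h2 : Real.exp ((M+β)*s) ≤ Real.exp ((M+β)*u) :=
        Real.exp_le_exp.2 (mul_le_mul_of_nonneg_left hs.2 hMβ.le)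
      have h3 : 0 < Real.exp ((M-β)*s) := Real.exp_pos _
      simp only [hkdef]
      linarith
    simpa using h1
  have hub : ∀ u : ℝ, 0 ≤ u → u ≤ (2/ρ) * Real.exp ((ρ/2)*u) := by
    intro u hu
    have h1 : (ρ/2)*u + 1 ≤ Real.exp ((ρ/2)*u) := Real.add_one_le_exp _
    rw [show (2/ρ) * Real.exp ((ρ/2)*u) = 2 * Real.exp ((ρ/2)*u) / ρ from by ring,
      le_div_iff₀ hρ]
    nlinarith
  have hgc : Continuous (fun u => 2 * (Real.exp ((M-β)*u) * K u)) :=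
    continuous_const.mul ((Real.continuous_exp.comp (continuous_const.mul continuous_id)).mul hKc)
  have hbound : ∀ u : ℝ, 0 ≤ u →
      |2 * (Real.exp ((M-β)*u) * K u)| ≤ (4/ρ) * Real.exp ((2*M+ρ/2) * u) := by
    intro u hu
    have e1 : Real.exp ((M-β)*u) * Real.exp ((M+β)*u) = Real.exp ((2*M)*u) := by
      rw [← Real.exp_add]; ring_nf
    have e2 : Real.exp ((ρ/2)*u) * Real.exp ((2*M)*u) = Real.exp ((2*M+ρ/2)*u) := by
      rw [← Real.exp_add]; ring_nf
    rw [abs_of_nonneg (by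
      have := hK0 u hu
      positivity)]
    calc 2 * (Real.exp ((M-β)*u) * K u)
        ≤ 2 * (Real.exp ((M-β)*u) * (u * Real.exp ((M+β)*u))) := by
          have h1 := hKb u hu
          have h2 := Real.exp_nonneg ((M-β)*u)
          nlinarith
      _ = 2 * u * Real.exp ((2*M)*u) := by rw [← e1]; ring
      _ ≤ 2 * ((2/ρ) * Real.exp ((ρ/2)*u)) * Real.exp ((2*M)*u) := by
          have h1 := hub u hu
          have h2 := Real.exp_nonneg ((2*M)*u)
          nlinarith
      _ = (4/ρ) * Real.exp ((2*M+ρ/2)*u) := by rw [← e2]; ring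
  have step0 : (∫ t in Set.Ioi (0 : ℝ), Real.exp (-ρ * t) *
        (∫ u in (0 : ℝ)..t, ∫ s in (0 : ℝ)..t,
          Real.exp (-M * (t - u)) * Real.exp (-M * (t - s)) *
            (Real.exp (-β * |u - s|) - Real.exp (-β * (u + s)))))
      = ∫ t in Set.Ioi (0:ℝ), Real.exp (-(ρ+2*M) * t) *
          ∫ u in (0:ℝ)..t, 2 * (Real.exp ((M-β)*u) * K u) := by
    apply setIntegral_congr_fun measurableSet_Ioi
    intro t htmem
    have ht : (0:ℝ) ≤ t := le_of_lt htmem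
    have h1 : (∫ u in (0 : ℝ)..t, ∫ s in (0 : ℝ)..t,
          Real.exp (-M * (t - u)) * Real.exp (-M * (t - s)) *
            (Real.exp (-β * |u - s|) - Real.exp (-β * (u + s))))
        = Real.exp (-(2*M)*t) * ∫ u in (0:ℝ)..t, ∫ s in (0:ℝ)..t,
            Real.exp (M*u) * Real.exp (M*s) * (Real.exp (-β*|u-s|) - Real.exp (-β*(u+s))) := by
      rw [← intervalIntegral.integral_const_mul]
      apply intervalIntegral.integral_congr
      intro u _
      simp only []
      rw [← intervalIntegral.integral_const_mul]
      apply intervalIntegral.integral_congr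
      intro s _
      simp only []
      have hsc : Real.exp (-M*(t-u)) * Real.exp (-M*(t-s))
          = Real.exp (-(2*M)*t) * (Real.exp (M*u) * Real.exp (M*s)) := by
        simp only [← Real.exp_add]
        ring_nf
      rw [hsc]
      ring
    have h2 := square_eq β M ht
    calc Real.exp (-ρ * t) * (∫ u in (0 : ℝ)..t, ∫ s in (0 : ℝ)..t,
          Real.exp (-M * (t - u)) * Real.exp (-M * (t - s)) *
            (Real.exp (-β * |u - s|) - Real.exp (-β * (u + s))))
        = Real.exp (-ρ*t) * (Real.exp (-(2*M)*t) *
            (2 * ∫ u in (0:ℝ)..t, Real.exp ((M-β)*u) * K u)) := by rw [h1, h2]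
      _ = (Real.exp (-ρ*t) * Real.exp (-(2*M)*t)) *
            (2 * ∫ u in (0:ℝ)..t, Real.exp ((M-β)*u) * K u) := by ring
      _ = Real.exp (-(ρ+2*M) * t) * ∫ u in (0:ℝ)..t, 2 * (Real.exp ((M-β)*u) * K u) := by
          rw [← Real.exp_add, intervalIntegral.integral_const_mul]
          ring_nf
  have step1 : (∫ t in Set.Ioi (0:ℝ), Real.exp (-(ρ+2*M) * t) *
          ∫ u in (0:ℝ)..t, 2 * (Real.exp ((M-β)*u) * K u))
      = (1/(ρ+2*M)) * ∫ t in Set.Ioi (0:ℝ), Real.exp (-(ρ+2*M) * t) *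
          (2 * (Real.exp ((M-β)*t) * K t)) :=
    ibp_Ioi (ρ+2*M) (2*M+ρ/2) (4/ρ) (by linarith) (by linarith) hgc hbound
  have step15 : (∫ t in Set.Ioi (0:ℝ), Real.exp (-(ρ+2*M) * t) *
          (2 * (Real.exp ((M-β)*t) * K t)))
      = 2 * ∫ t in Set.Ioi (0:ℝ), Real.exp (-(ρ+M+β) * t) * K t := by
    rw [← MeasureTheory.integral_const_mul]
    apply setIntegral_congr_fun measurableSet_Ioi
    intro t _
    simp only []
    rw [show Real.exp (-(ρ+2*M)*t) * (2 * (Real.exp ((M-β)*t) * K t))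
        = 2 * ((Real.exp (-(ρ+2*M)*t) * Real.exp ((M-β)*t)) * K t) from by ring,
      ← Real.exp_add]
    ring_nf
  have hkb2 : ∀ s : ℝ, 0 ≤ s → |k s| ≤ 1 * Real.exp ((M+β) * s) := by
    intro s hs
    rw [abs_of_nonneg (hknn s hs), one_mul]
    have h3 : 0 < Real.exp ((M-β)*s) := Real.exp_pos _
    simp only [hkdef]
    linarith
  have step2 : (∫ t in Set.Ioi (0:ℝ), Real.exp (-(ρ+M+β) * t) * K t)
      = (1/(ρ+M+β)) * ∫ t in Set.Ioi (0:ℝ), Real.exp (-(ρ+M+β) * t) * k t :=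
    ibp_Ioi (ρ+M+β) (M+β) 1 hMβ (by linarith) hkc hkb2
  have step3 : (∫ t in Set.Ioi (0:ℝ), Real.exp (-(ρ+M+β) * t) * k t)
      = 1/ρ - 1/(ρ+2*β) := by
    have hsp : ∀ t ∈ Set.Ioi (0:ℝ), Real.exp (-(ρ+M+β)*t) * k t
        = Real.exp (-ρ*t) - Real.exp (-(ρ+2*β)*t) := by
      intro t _
      simp only [hkdef, mul_sub, ← Real.exp_add]
      ring_nf
    rw [setIntegral_congr_fun measurableSet_Ioi hsp,
      MeasureTheory.integral_sub (exp_neg_integrableOn_Ioi 0 hρ)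
        (exp_neg_integrableOn_Ioi 0 (by linarith : (0:ℝ) < ρ+2*β)),
      int_exp_neg_Ioi hρ, int_exp_neg_Ioi (by linarith : (0:ℝ) < ρ+2*β)]
  rw [step0, step1, step15, step2, step3]
  field_simp
  ring
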